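/- Let A_1,...,A_k be m-by-n real matrices and let A in R^{km x n} be their vertical stack, assumed to have rank n. Suppose s > k/2 and that for every nonzero vector v in the column space of A and for every subset S of {1,...,k} with |S| = s, the sum over i in S of ||v_i||_2 is strictly greater than the sum over i not in S of ||v_i||_2, where v_i denotes the i-th m-by-1 block of v. Then for every subset Sc of {1,...,k} with |Sc| = 2s - k, the stacked matrix A_{Sc} has rank n. -/

import Mathlib

/-- Euclidean norm of a vector in `ℝ^m`. -/
noncomputable def euclNorm {m : ℕ} (v : Fin m → ℝ) : ℝ :=
  Real.sqrt (∑ j, v j ^ 2)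

/-- The vertical stack of the matrices `A 1, ..., A k`. -/
def stack {k m n : ℕ} (A : Fin k → Matrix (Fin m) (Fin n) ℝ) :
    Matrix (Fin k × Fin m) (Fin n) ℝ :=
  Matrix.of fun p j => A p.1 p.2 j

/-!
If the rows of `A` indexed by `Sc` do not determine `u`, some nonzero `v = A u` has all its
blocks in `Sc` equal to zero. The remaining `2 (k - s)` blocks split into two halves `T₁, T₂`
of size `k - s`; both `Sc ∪ T₁` and `Sc ∪ T₂` have size `s`, and the hypothesis applied to
them gives both `∑_{T₂} < ∑_{T₁}` and `∑_{T₁} < ∑_{T₂}`.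
-/

open Finset Matrix

theorem Matrix.rank_eq_card_iff_mulVec_eq_zero {R m n : Type*} [Field R] [Fintype n]
    (M : Matrix m n R) : M.rank = Fintype.card n ↔ ∀ v, M *ᵥ v = 0 → v = 0 := by
  have h := LinearMap.finrank_range_add_finrank_ker M.mulVecLin
  rw [Module.finrank_fintype_fun_eq_card] at h
  rw [Matrix.rank, ← Matrix.ker_mulVecLin_eq_bot_iff, ← Submodule.finrank_eq_zero]
  omega

theorem Finset.exists_card_eq_sum_le_sum_compl {ι M : Type*} [Fintype ι] [DecidableEq ι]
    [AddCommMonoid M] [LinearOrder M] (f : ι → M) (Z : Finset ι) (hZ : ∀ i ∈ Z, f i = 0)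
    {r : ℕ} (hcard : #Z + 2 * r = Fintype.card ι) :
    ∃ S : Finset ι, #S = #Z + r ∧ ∑ i ∈ S, f i ≤ ∑ i ∈ Sᶜ, f i := by
  have hZc : #Zᶜ = 2 * r := by rw [card_compl]; omega
  have key : ∀ T ⊆ Zᶜ, #T = r → ∑ i ∈ T, f i ≤ ∑ i ∈ Zᶜ \ T, f i →
      ∃ S : Finset ι, #S = #Z + r ∧ ∑ i ∈ S, f i ≤ ∑ i ∈ Sᶜ, f i := by
    intro T hT hTcard hle
    have hdisj : Disjoint Z T := disjoint_compl_right.mono_right hT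
    refine ⟨Z ∪ T, by rw [card_union_of_disjoint hdisj, hTcard], ?_⟩
    rwa [sum_union hdisj, sum_eq_zero hZ, zero_add, compl_union, ← sdiff_eq_inter_compl]
  obtain ⟨T, hT, hTcard⟩ := exists_subset_card_eq (s := Zᶜ) (n := r) (by omega)
  rcases le_total (∑ i ∈ T, f i) (∑ i ∈ Zᶜ \ T, f i) with hle | hle
  · exact key T hT hTcard hle
  · refine key (Zᶜ \ T) sdiff_subset ?_ ?_
    · rw [card_sdiff_of_subset hT]; omega
    · rwa [sdiff_sdiff_eq_self hT]

theorem euclNorm_eq_zero_of_forall_eq_zero {m : ℕ} {v : Fin m → ℝ} (hv : ∀ j, v j = 0) :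
    euclNorm v = 0 := by
  simp [euclNorm, hv]

/-- If the stack `A` has rank `n`, `s > k/2`, and for every nonzero `v`
in the column space of `A` and every subset `S` of cardinality `s` the sum of the
block norms over `S` strictly exceeds the sum over the complement, then every
stacked submatrix over a subset of cardinality `2s - k` has rank `n`. -/
theorem rank_of_range_space_conditions {k m n s : ℕ}
    (A : Fin k → Matrix (Fin m) (Fin n) ℝ)
    (hrank : (stack A).rank = n)
    (hs : k < 2 * s)
    (hcond : ∀ v : Fin k × Fin m → ℝ,
      (∃ u : Fin n → ℝ, (stack A).mulVec u = v) → v ≠ 0 →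
      ∀ S : Finset (Fin k), S.card = s →
        ∑ i ∈ Sᶜ, euclNorm (fun j => v (i, j)) < ∑ i ∈ S, euclNorm (fun j => v (i, j))) :
    ∀ Sc : Finset (Fin k), Sc.card = 2 * s - k →
      (Matrix.of fun (p : ↥Sc × Fin m) (j : Fin n) => A p.1 p.2 j).rank = n := by
  intro Sc hSc
  have hinj := (Matrix.rank_eq_card_iff_mulVec_eq_zero (stack A)).mp (by simpa using hrank)
  suffices ∀ u, (Matrix.of fun (p : ↥Sc × Fin m) (j : Fin n) => A p.1 p.2 j) *ᵥ u = 0 → u = 0 by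
    simpa using (Matrix.rank_eq_card_iff_mulVec_eq_zero _).mpr this
  intro u hu
  by_contra hu0
  set v := stack A *ᵥ u
  have hv0 : v ≠ 0 := fun hv => hu0 (hinj u hv)
  have hvSc : ∀ i ∈ Sc, euclNorm (fun j => v (i, j)) = 0 := fun i hi =>
    euclNorm_eq_zero_of_forall_eq_zero fun j => congrFun hu (⟨i, hi⟩, j)
  have hScle : #Sc ≤ k := by simpa using card_le_univ Sc
  have hcard : #Sc + 2 * (k - s) = Fintype.card (Fin k) := by rw [Fintype.card_fin]; omega
  obtain ⟨S, hS, hle⟩ := exists_card_eq_sum_le_sum_compl _ Sc hvSc hcard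
  exact (hcond v ⟨u, rfl⟩ hv0 S (by omega)).not_ge hle
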